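/- For every f ∈ L¹_loc(ℝⁿ) and all x ∈ ℝⁿ, Mf(x) ≤ 6ⁿ ∑_{α=1}^{3ⁿ} M^{𝒟_α} f(x), where M is the Hardy–Littlewood maximal operator over all cubes and M^{𝒟_α} are the dyadic maximal operators associated to the 3ⁿ shifted dyadic grids 𝒟_α. -/

import Mathlib

open MeasureTheory ENNReal Set
open scoped NNReal
noncomputable section

abbrev Rn (n : ℕ) := Fin n → ℝ
variable {n : ℕ}

def cubeOf (a : Rn n) (h : ℝ) : Set (Rn n) := Set.univ.pi fun i => Set.Ico (a i) (a i + h)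

def IsCube (Q : Set (Rn n)) : Prop := ∃ (a : Rn n) (h : ℝ), 0 < h ∧ Q = cubeOf a h

def avgE (Q : Set (Rn n)) (f : Rn n → ℝ≥0∞) : ℝ≥0∞ :=
  (volume Q)⁻¹ * ∫⁻ x in Q, f x ∂volume

def maximal (f : Rn n → ℝ≥0∞) (x : Rn n) : ℝ≥0∞ :=
  ⨆ (Q : Set (Rn n)) (_ : IsCube Q ∧ x ∈ Q), avgE Q f

def IsDyadicGrid (D : Set (Set (Rn n))) : Prop :=
  (∀ Q ∈ D, ∃ (a : Rn n) (k : ℤ), Q = cubeOf a ((2:ℝ)^k)) ∧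
  (∀ Q ∈ D, ∀ R ∈ D, Q ∩ R = Q ∨ Q ∩ R = R ∨ Q ∩ R = ∅) ∧
  (∀ (k : ℤ) (x : Rn n), ∃! Q, Q ∈ D ∧ (∃ a : Rn n, Q = cubeOf a ((2:ℝ)^k)) ∧ x ∈ Q)

def dyadicMaximal (D : Set (Set (Rn n))) (f : Rn n → ℝ≥0∞) (x : Rn n) : ℝ≥0∞ :=
  ⨆ (Q : Set (Rn n)) (_ : Q ∈ D ∧ x ∈ Q), avgE Q f

def vmodular (p : Rn n → ℝ) (f : Rn n → ℝ≥0∞) : ℝ≥0∞ := ∫⁻ x, f x ^ p x ∂volume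

def vnorm (p : Rn n → ℝ) (f : Rn n → ℝ≥0∞) : ℝ≥0∞ :=
  sInf {lam : ℝ≥0∞ | 0 < lam ∧ vmodular p (fun x => f x / lam) ≤ 1}

def wnorm (p : Rn n → ℝ) (w f : Rn n → ℝ≥0∞) : ℝ≥0∞ := vnorm p (fun x => f x * w x)


/-!
Along each axis, the intervals `2^k ([0, 1) + m + (-1)^k j / 3)`, `m ∈ ℤ`, form for each `j` a
nested family of partitions of `ℝ`: because the shift alternates in sign, every endpoint of
level `k + 1` is an endpoint of level `k`. An interval of length `h ≤ 2^k / 3` cannot contain in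
its interior both an endpoint of the unshifted level-`k` partition and one of a partition shifted
by `±2^k / 3`, so it lies in a level-`k` interval of one of them. Taking `2^k ≤ 6 h`, every cube
of side `h` lies in a cube of one of the `3^n` product grids whose volume is at most `6^n` times
larger, and averaging over the larger cube loses at most that factor.
-/

lemma volume_cubeOf (a : Rn n) (h : ℝ) : volume (cubeOf a h) = ENNReal.ofReal h ^ n := by
  simp only [cubeOf, volume_pi_pi, Real.volume_Ico, add_sub_cancel_left, Finset.prod_const,
    Finset.card_univ, Fintype.card_fin]

lemma side_eq_of_cubeOf_eq (hn : n ≠ 0) {a b : Rn n} {h h' : ℝ} (hh : 0 ≤ h) (hh' : 0 ≤ h')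
    (e : cubeOf a h = cubeOf b h') : h = h' := by
  have hvol := congrArg volume e
  rw [volume_cubeOf, volume_cubeOf] at hvol
  exact (ENNReal.ofReal_eq_ofReal_iff hh hh').1 ((ENNReal.pow_right_strictMono hn).injective hvol)

namespace ShiftedDyadic

def offset (k j : ℤ) : ℝ := (-1) ^ k * j / 3

def leftEnd (k m j : ℤ) : ℝ := 2 ^ k * (m + offset k j)

/-- `interval k m j = 2^k ([0, 1) + m + (-1)^k j / 3)`: level `k`, position `m`, grid `j`. -/
def interval (k m j : ℤ) : Set ℝ := Ico (leftEnd k m j) (leftEnd k m j + 2 ^ k)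

lemma offset_succ (k j : ℤ) : offset (k + 1) j = -offset k j := by
  simp only [offset, zpow_add_one₀ (by norm_num : (-1 : ℝ) ≠ 0)]
  ring

lemma three_mul_offset (k j : ℤ) : 3 * offset k j = ((k.negOnePow * j : ℤ) : ℝ) := by
  rw [offset, Int.cast_mul, Int.cast_negOnePow]
  ring

lemma leftEnd_add_zpow (k m j : ℤ) : leftEnd k m j + 2 ^ k = leftEnd k (m + 1) j := by
  simp only [leftEnd, Int.cast_add, Int.cast_one]
  ring

lemma interval_eq_Ico (k m j : ℤ) :
    interval k m j = Ico (leftEnd k m j) (leftEnd k (m + 1) j) := by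
  rw [interval, leftEnd_add_zpow]

lemma leftEnd_mono (k j : ℤ) : Monotone fun m => leftEnd k m j := fun m m' h => by
  have : (m : ℝ) ≤ m' := Int.cast_le.2 h
  simp only [leftEnd]
  gcongr

lemma leftEnd_succ (k m j : ℤ) :
    leftEnd (k + 1) m j = leftEnd k (2 * m - k.negOnePow * j) j := by
  have h := three_mul_offset k j
  push_cast at h
  simp only [leftEnd, offset_succ, zpow_add_one₀ (two_ne_zero : (2 : ℝ) ≠ 0)]
  push_cast
  linear_combination (-(2 : ℝ) ^ k) * h

lemma mem_interval_iff {k m j : ℤ} {x : ℝ} :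
    x ∈ interval k m j ↔ ⌊x / 2 ^ k - offset k j⌋ = m := by
  have hp : (0 : ℝ) < 2 ^ k := zpow_pos two_pos k
  rw [Int.floor_eq_iff, interval, mem_Ico, leftEnd, le_sub_iff_add_le, sub_lt_iff_lt_add,
    le_div_iff₀ hp, div_lt_iff₀ hp]
  constructor <;> rintro ⟨h₁, h₂⟩ <;> constructor <;> linarith

lemma exists_interval_succ_superset (k m j : ℤ) :
    ∃ m', interval k m j ⊆ interval (k + 1) m' j := by
  obtain ⟨s, hs⟩ : ∃ s, s = (k.negOnePow : ℤ) * j := ⟨_, rfl⟩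
  refine ⟨(m + s) / 2, ?_⟩
  simp only [interval_eq_Ico, leftEnd_succ, ← hs]
  exact Ico_subset_Ico (leftEnd_mono k j (by omega)) (leftEnd_mono k j (by omega))

lemma exists_interval_superset {k l : ℤ} (hkl : k ≤ l) (m j : ℤ) :
    ∃ m', interval k m j ⊆ interval l m' j := by
  induction l, hkl using Int.leInduction with
  | base => exact ⟨m, subset_rfl⟩
  | succ l _ ih =>
    obtain ⟨m', hm'⟩ := ih
    obtain ⟨m'', hm''⟩ := exists_interval_succ_superset l m' j
    exact ⟨m'', hm'.trans hm''⟩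

lemma interval_subset_or_disjoint {k l : ℤ} (hkl : k ≤ l) (m m' j : ℤ) :
    interval k m j ⊆ interval l m' j ∨ Disjoint (interval k m j) (interval l m' j) := by
  obtain ⟨m'', hm''⟩ := exists_interval_superset hkl m j
  rcases eq_or_ne m'' m' with rfl | hne
  · exact Or.inl hm''
  · refine Or.inr (Set.disjoint_left.2 fun x hx hx' => hne ?_)
    rw [← mem_interval_iff.1 (hm'' hx), ← mem_interval_iff.1 hx']

lemma exists_Ico_subset_interval {k : ℤ} {h : ℝ} (hh : 3 * h ≤ 2 ^ k) (a : ℝ) :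
    ∃ (j : Fin 3) (m : ℤ), Ico a (a + h) ⊆ interval k m j := by
  have hp : (0 : ℝ) < 2 ^ k := zpow_pos two_pos k
  suffices ∃ (j : Fin 3) (m : ℤ), m + offset k j ≤ a / 2 ^ k ∧
      a / 2 ^ k + 1 / 3 ≤ m + 1 + offset k j by
    obtain ⟨j, m, h₁, h₂⟩ := this
    refine ⟨j, m, Ico_subset_Ico ?_ ?_⟩
    · have := mul_le_mul_of_nonneg_left h₁ hp.le
      rw [mul_div_cancel₀ _ hp.ne'] at this
      rw [leftEnd]
      linarith
    · have := mul_le_mul_of_nonneg_left h₂ hp.le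
      rw [mul_add, mul_div_cancel₀ _ hp.ne'] at this
      rw [leftEnd]
      linarith
  set y := a / 2 ^ k
  have hy₁ := Int.floor_le y
  have hy₂ := Int.lt_floor_add_one y
  have hc := three_mul_offset k 1
  -- If `y` lies in the last third of its unshifted unit interval, it lies in the first two
  -- thirds of its unit interval shifted by `±1/3`.
  by_cases hy : y ≤ ⌊y⌋ + 2 / 3
  · refine ⟨0, ⌊y⌋, ?_⟩
    simp only [Fin.val_zero, Nat.cast_zero, Int.cast_zero, offset, mul_zero, zero_div, add_zero]
    constructor <;> linarith
  rcases Int.units_eq_one_or k.negOnePow with hs | hs <;>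
    simp only [hs, Units.val_one, Units.val_neg, mul_one, Int.cast_one, Int.cast_neg] at hc
  · exact ⟨1, ⌊y⌋, by simp only [Fin.val_one, Nat.cast_one]; constructor <;> linarith⟩
  · refine ⟨1, ⌊y⌋ + 1, ?_⟩
    simp only [Fin.val_one, Nat.cast_one, Int.cast_add, Int.cast_one]
    constructor <;> linarith


def gridCube (k : ℤ) (m j : Fin n → ℤ) : Set (Rn n) :=
  cubeOf (fun i => leftEnd k (m i) (j i)) (2 ^ k)

lemma gridCube_eq_pi (k : ℤ) (m j : Fin n → ℤ) :
    gridCube k m j = univ.pi fun i => interval k (m i) (j i) := rfl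

lemma mem_gridCube_iff {k : ℤ} {m j : Fin n → ℤ} {x : Rn n} :
    x ∈ gridCube k m j ↔ m = fun i => ⌊x i / 2 ^ k - offset k (j i)⌋ := by
  simp only [gridCube_eq_pi, mem_univ_pi, mem_interval_iff, funext_iff, eq_comm]

lemma gridCube_subset_or_disjoint {k l : ℤ} (hkl : k ≤ l) (m m' j : Fin n → ℤ) :
    gridCube k m j ⊆ gridCube l m' j ∨ Disjoint (gridCube k m j) (gridCube l m' j) := by
  by_cases hsub : ∀ i, interval k (m i) (j i) ⊆ interval l (m' i) (j i)
  · exact Or.inl (pi_mono fun i _ => hsub i)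
  · obtain ⟨i, hi⟩ := not_forall.1 hsub
    exact Or.inr <| disjoint_univ_pi.2
      ⟨i, (interval_subset_or_disjoint hkl _ _ _).resolve_left hi⟩

/-- The grid `𝒟_α`; the index `α ∈ {0, 1, 2}ⁿ` chooses the shift along each axis. -/
def shiftedGrid (α : Fin n → Fin 3) : Set (Set (Rn n)) :=
  {Q | ∃ k m, Q = gridCube k m fun i => α i}

lemma inter_eq_or_of_mem_shiftedGrid {α : Fin n → Fin 3} {Q R : Set (Rn n)}
    (hQ : Q ∈ shiftedGrid α) (hR : R ∈ shiftedGrid α) : Q ∩ R = Q ∨ Q ∩ R = R ∨ Q ∩ R = ∅ := by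
  obtain ⟨k, m, rfl⟩ := hQ
  obtain ⟨l, m', rfl⟩ := hR
  rcases le_total k l with hkl | hlk
  · rcases gridCube_subset_or_disjoint hkl m m' _ with h | h
    · exact Or.inl (inter_eq_left.2 h)
    · exact Or.inr (Or.inr h.inter_eq)
  · rcases gridCube_subset_or_disjoint hlk m' m _ with h | h
    · exact Or.inr (Or.inl (inter_eq_right.2 h))
    · exact Or.inr (Or.inr h.symm.inter_eq)

lemma existsUnique_mem_shiftedGrid (α : Fin n → Fin 3) (k : ℤ) (x : Rn n) :
    ∃! Q, Q ∈ shiftedGrid α ∧ (∃ a : Rn n, Q = cubeOf a (2 ^ k)) ∧ x ∈ Q := by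
  refine ⟨gridCube k _ fun i => α i, ⟨⟨k, _, rfl⟩, ⟨_, rfl⟩, mem_gridCube_iff.2 rfl⟩, ?_⟩
  rintro _ ⟨⟨k', m', rfl⟩, ⟨a, ha⟩, hx⟩
  rcases eq_or_ne n 0 with rfl | hn
  · exact (Subsingleton.eq_univ_of_nonempty ⟨x, hx⟩).trans
      (Subsingleton.eq_univ_of_nonempty ⟨x, mem_gridCube_iff.2 rfl⟩).symm
  obtain rfl : k' = k := zpow_right_injective₀ two_pos (by norm_num)
    (side_eq_of_cubeOf_eq hn (zpow_pos two_pos k').le (zpow_pos two_pos k).le ha)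
  rw [mem_gridCube_iff.1 hx]

lemma isDyadicGrid_shiftedGrid (α : Fin n → Fin 3) : IsDyadicGrid (shiftedGrid α) :=
  ⟨fun _ ⟨k, _, hQ⟩ => ⟨_, k, hQ⟩, fun _ hQ _ hR => inter_eq_or_of_mem_shiftedGrid hQ hR,
    existsUnique_mem_shiftedGrid α⟩

lemma exists_zpow_two_mem_Icc {h : ℝ} (hh : 0 < h) :
    ∃ k : ℤ, 3 * h ≤ 2 ^ k ∧ 2 ^ k ≤ 6 * h := by
  obtain ⟨t, ht₁, ht₂⟩ := exists_mem_Ico_zpow (by positivity : 0 < 3 * h) one_lt_two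
  rw [zpow_add_one₀ two_ne_zero] at ht₂
  refine ⟨t + 1, ?_, ?_⟩ <;> rw [zpow_add_one₀ two_ne_zero] <;> linarith

lemma exists_shiftedGrid_superset {Q : Set (Rn n)} (hQ : IsCube Q) :
    ∃ α : Fin n → Fin 3, ∃ Qα ∈ shiftedGrid α, Q ⊆ Qα ∧ volume Qα ≤ 6 ^ n * volume Q := by
  obtain ⟨a, h, hh, rfl⟩ := hQ
  obtain ⟨k, hk₃, hk₆⟩ := exists_zpow_two_mem_Icc hh
  choose α m hm using fun i => exists_Ico_subset_interval hk₃ (a i)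
  refine ⟨α, gridCube k m fun i => α i, ⟨k, m, rfl⟩, pi_mono fun i _ => hm i, ?_⟩
  rw [gridCube, volume_cubeOf, volume_cubeOf, ← mul_pow]
  gcongr
  calc ENNReal.ofReal (2 ^ k) ≤ ENNReal.ofReal (6 * h) := ENNReal.ofReal_le_ofReal hk₆
    _ = 6 * ENNReal.ofReal h := by rw [ENNReal.ofReal_mul (by norm_num), ENNReal.ofReal_ofNat]

end ShiftedDyadic

lemma avgE_le_mul_avgE {Q R : Set (Rn n)} {c : ℝ≥0∞} (hc₀ : c ≠ 0) (hc : c ≠ ∞) (hQR : Q ⊆ R)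
    (hvol : volume R ≤ c * volume Q) (f : Rn n → ℝ≥0∞) : avgE Q f ≤ c * avgE R f := by
  have hinv : (volume Q)⁻¹ ≤ c * (volume R)⁻¹ :=
    calc (volume Q)⁻¹ = c * (c * volume Q)⁻¹ := by
          rw [ENNReal.mul_inv (Or.inl hc₀) (Or.inl hc), ← mul_assoc,
            ENNReal.mul_inv_cancel hc₀ hc, one_mul]
      _ ≤ c * (volume R)⁻¹ := by gcongr
  rw [avgE, avgE, ← mul_assoc]
  exact mul_le_mul' hinv (lintegral_mono_set hQR)

lemma avgE_le_dyadicMaximal {D : Set (Set (Rn n))} {Q : Set (Rn n)} {x : Rn n} (hQ : Q ∈ D)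
    (hx : x ∈ Q) (f : Rn n → ℝ≥0∞) : avgE Q f ≤ dyadicMaximal D f x :=
  le_iSup₂_of_le Q ⟨hQ, hx⟩ le_rfl

theorem maximal_le_mul_sum_dyadicMaximal {ι : Type*} [Fintype ι] {D : ι → Set (Set (Rn n))}
    {c : ℝ≥0∞} (hc₀ : c ≠ 0) (hc : c ≠ ∞)
    (hD : ∀ Q : Set (Rn n), IsCube Q → ∃ (a : ι) (Qa : Set (Rn n)),
      Qa ∈ D a ∧ Q ⊆ Qa ∧ volume Qa ≤ c * volume Q)
    (f : Rn n → ℝ≥0∞) (x : Rn n) : maximal f x ≤ c * ∑ a, dyadicMaximal (D a) f x := by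
  refine iSup₂_le fun Q ⟨hQ, hxQ⟩ => ?_
  obtain ⟨a, Qa, hQa, hsub, hvol⟩ := hD Q hQ
  calc avgE Q f ≤ c * avgE Qa f := avgE_le_mul_avgE hc₀ hc hsub hvol f
    _ ≤ c * dyadicMaximal (D a) f x := by gcongr; exact avgE_le_dyadicMaximal hQa (hsub hxQ) f
    _ ≤ c * ∑ a, dyadicMaximal (D a) f x := by
        gcongr
        exact Finset.single_le_sum_of_canonicallyOrdered (f := fun a => dyadicMaximal (D a) f x)
          (Finset.mem_univ a)

open ShiftedDyadic in
theorem maximal_le_sum_dyadic (n : ℕ) :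
    ∃ D : Fin (3^n) → Set (Set (Rn n)),
      (∀ a, IsDyadicGrid (D a)) ∧
      (∀ Q : Set (Rn n), IsCube Q → ∃ (a : Fin (3^n)) (Qa : Set (Rn n)),
        Qa ∈ D a ∧ Q ⊆ Qa ∧ volume Qa ≤ 6^n * volume Q) ∧
      ∀ f : Rn n → ℝ, LocallyIntegrable f volume → ∀ x : Rn n,
        maximal (fun y => ENNReal.ofReal |f y|) x ≤
          6^n * ∑ a : Fin (3^n),
            dyadicMaximal (D a) (fun y => ENNReal.ofReal |f y|) x := by
  have hcover : ∀ Q : Set (Rn n), IsCube Q → ∃ (a : Fin (3^n)) (Qa : Set (Rn n)),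
      Qa ∈ shiftedGrid (finFunctionFinEquiv.symm a) ∧ Q ⊆ Qa ∧ volume Qa ≤ 6^n * volume Q := by
    intro Q hQ
    obtain ⟨α, Qα, hQα, hsub, hvol⟩ := exists_shiftedGrid_superset hQ
    exact ⟨finFunctionFinEquiv α, Qα, by rwa [Equiv.symm_apply_apply], hsub, hvol⟩
  refine ⟨_, fun a => isDyadicGrid_shiftedGrid _, hcover, fun f _ x => ?_⟩
  exact maximal_le_mul_sum_dyadicMaximal (by positivity) (ENNReal.pow_ne_top (by norm_num))
    hcover _ x
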